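/- arXiv:1911.12241 — 2 statements merged into one kernel-verified Lean document; each statement's English description precedes it below -/
import Mathlib

section
/- Negative answer to Kreisel's question: let d ≥ 1, let f(t) = e^{-π|t|²} be the standard Gaussian on ℝ^d, let N > 1 and R > 0, and suppose there exists g ∈ L²(ℝ^d) \ {0} such that |V_g f(z)| < |⟨f,g⟩|/N for every z ∈ ℝ^{2d} with |z| > R. Then R ≥ √(2 log N / π). In particular, for R < √(2 log N / π) no such window g exists. -/
open MeasureTheory Complex Real

/-- The standard Gaussian `g(t) = e^{-π|t|²}` on `ℝ^d`, as a complex-valued function. -/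
noncomputable def gaussW (d : ℕ) : EuclideanSpace ℝ (Fin d) → ℂ :=
  fun t => Complex.exp (-(π : ℂ) * (‖t‖ : ℂ) ^ 2)

/-- The short-time Fourier transform
`V_g f(x,ω) = ∫ e^{-2πi t·ω} f(t) conj (g(t-x)) dt`. -/
noncomputable def STFT (d : ℕ) (g f : EuclideanSpace ℝ (Fin d) → ℂ)
    (x ω : EuclideanSpace ℝ (Fin d)) : ℂ :=
  ∫ t : EuclideanSpace ℝ (Fin d),
    Complex.exp (-2 * (π : ℂ) * Complex.I * ((∑ j, t j * ω j : ℝ) : ℂ)) * f t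
      * (starRingEnd ℂ) (g (t - x))

/-- The `L²` inner product `⟨f,g⟩ = ∫ f(t) conj (g(t)) dt`. -/
noncomputable def L2inner (d : ℕ) (f g : EuclideanSpace ℝ (Fin d) → ℂ) : ℂ :=
  ∫ t : EuclideanSpace ℝ (Fin d), f t * (starRingEnd ℂ) (g t)

/-!
On the line `x = a e₁`, `ω = b e₁` the STFT of the Gaussian with window `g` equals
`e^{-π|z|²/2}`, in modulus, times an entire function of `z = a + ib` (a Bargmann transform of
`g`) whose value at `0` is `⟨f, g⟩`. The maximum modulus principle on the circle of radius
`r > R` therefore gives `|⟨f, g⟩| ≤ e^{πr²/2} |⟨f, g⟩| / N`, i.e. `N ≤ e^{πr²/2}`; letting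
`r ↓ R` yields the bound.
-/

open ComplexConjugate

section Domination

variable {V : Type*} [NormedAddCommGroup V] [InnerProductSpace ℝ V] [FiniteDimensional ℝ V]
  [MeasurableSpace V] [BorelSpace V] {b : ℝ}

lemma integrable_rexp_neg_mul_sq_norm (hb : 0 < b) :
    Integrable (fun v : V => rexp (-b * ‖v‖ ^ 2)) := by
  simpa [Complex.norm_exp, ← Complex.ofReal_pow] using
    (GaussianFourier.integrable_cexp_neg_mul_sq_norm_add (V := V) (b := b)
      (by simpa using hb) 0 0).norm

lemma memLp_two_rexp_neg_mul_sq_norm_add (hb : 0 < b) (c : ℝ) :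
    MemLp (fun v : V => rexp (-b * ‖v‖ ^ 2 + c * ‖v‖)) 2 := by
  have hcont : Continuous (fun v : V => rexp (-b * ‖v‖ ^ 2 + c * ‖v‖)) := by fun_prop
  rw [memLp_two_iff_integrable_sq hcont.aestronglyMeasurable]
  refine ((integrable_rexp_neg_mul_sq_norm hb).const_mul (rexp (c ^ 2 / b))).mono'
    (hcont.pow 2).aestronglyMeasurable (.of_forall fun v => ?_)
  rw [norm_of_nonneg (by positivity), ← Real.exp_nat_mul, ← Real.exp_add]
  gcongr
  have hsq : c ^ 2 / b + -b * ‖v‖ ^ 2 - (2 : ℕ) * (-b * ‖v‖ ^ 2 + c * ‖v‖)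
      = b * (‖v‖ - c / b) ^ 2 := by
    field_simp; ring
  linarith [hsq, show 0 ≤ b * (‖v‖ - c / b) ^ 2 by positivity]

lemma integrable_rexp_neg_mul_sq_norm_add_mul (hb : 0 < b) {g : V → ℂ} (hg : MemLp g 2) (c : ℝ) :
    Integrable (fun v => rexp (-b * ‖v‖ ^ 2 + c * ‖v‖) * ‖g v‖) :=
  (memLp_two_rexp_neg_mul_sq_norm_add hb c).integrable_mul hg.norm

end Domination

section BargmannLine

variable {d : ℕ} (j : Fin d)

noncomputable def lineGaussKernel (s : EuclideanSpace ℝ (Fin d)) (w : ℂ) : ℂ :=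
  cexp (-π * ‖s‖ ^ 2 - 2 * π * s j * w)

lemma norm_lineGaussKernel_le (s : EuclideanSpace ℝ (Fin d)) {w : ℂ} {M : ℝ}
    (hw : |w.re| ≤ M) :
    ‖lineGaussKernel j s w‖ ≤ rexp (-π * ‖s‖ ^ 2 + 2 * π * M * ‖s‖) := by
  rw [lineGaussKernel, Complex.norm_exp]
  gcongr
  have hre : (-π * ‖s‖ ^ 2 - 2 * π * s j * w : ℂ).re = -π * ‖s‖ ^ 2 - 2 * π * (s j * w.re) := by
    simp only [← ofReal_pow, sub_re, neg_re, mul_re, mul_im, ofReal_re, ofReal_im, re_ofNat,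
      im_ofNat]
    ring
  rw [hre]
  have : -(s j * w.re) ≤ M * ‖s‖ := by
    calc -(s j * w.re) ≤ |s j| * |w.re| := by rw [← abs_mul]; exact neg_le_abs _
      _ ≤ ‖s‖ * M :=
        mul_le_mul (by simpa using PiLp.norm_apply_le s j) hw (abs_nonneg _) (norm_nonneg _)
      _ = M * ‖s‖ := mul_comm _ _
  nlinarith [pi_pos]

lemma hasDerivAt_lineGaussKernel (s : EuclideanSpace ℝ (Fin d)) (w : ℂ) :
    HasDerivAt (lineGaussKernel j s) (lineGaussKernel j s w * (-2 * π * s j)) w := by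
  have := ((hasDerivAt_id' w).const_mul (2 * π * (s j : ℂ))).const_sub (-π * (‖s‖ : ℂ) ^ 2)
  exact this.cexp.congr_deriv (by unfold lineGaussKernel; ring)

lemma continuous_lineGaussKernel (w : ℂ) :
    Continuous (fun s : EuclideanSpace ℝ (Fin d) => lineGaussKernel j s w) := by
  unfold lineGaussKernel; fun_prop

variable (g : EuclideanSpace ℝ (Fin d) → ℂ)

noncomputable def lineGaussIntegral (w : ℂ) : ℂ :=
  ∫ s, lineGaussKernel j s w * conj (g s)

lemma differentiable_lineGaussIntegral (hg : MemLp g 2) :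
    Differentiable ℂ (lineGaussIntegral j g) := by
  intro w₀
  set M := ‖w₀‖ + 1
  have hre : ∀ w ∈ Metric.ball w₀ 1, |w.re| ≤ M := fun w hw =>
    (abs_re_le_norm w).trans <| by
      have := norm_le_norm_add_norm_sub' w w₀
      have := mem_ball_iff_norm.mp hw
      linarith
  have hmeas : ∀ w, AEStronglyMeasurable (fun s => lineGaussKernel j s w * conj (g s)) :=
    fun w => (continuous_lineGaussKernel j w).aestronglyMeasurable.mul
      (continuous_conj.comp_aestronglyMeasurable hg.1)
  have hint : Integrable (fun s => lineGaussKernel j s w₀ * conj (g s)) := by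
    refine (integrable_rexp_neg_mul_sq_norm_add_mul pi_pos hg (2 * π * M)).mono' (hmeas w₀)
      (.of_forall fun s => ?_)
    rw [norm_mul, RCLike.norm_conj]
    gcongr
    exact norm_lineGaussKernel_le j s (hre w₀ (Metric.mem_ball_self one_pos))
  have hderiv_le : ∀ s, ∀ w ∈ Metric.ball w₀ 1,
      ‖lineGaussKernel j s w * (-2 * π * s j) * conj (g s)‖
        ≤ rexp (-π * ‖s‖ ^ 2 + 2 * π * (M + 1) * ‖s‖) * ‖g s‖ := by
    intro s w hw
    have hs : 2 * π * |s j| ≤ rexp (2 * π * ‖s‖) := by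
      have := (by simpa using PiLp.norm_apply_le s j : |s j| ≤ ‖s‖)
      nlinarith [add_one_le_exp (2 * π * ‖s‖), pi_pos]
    have hfac : ‖(-2 * π * s j : ℂ)‖ = 2 * π * |s j| := by
      simp [abs_of_pos pi_pos]
    rw [norm_mul, norm_mul, RCLike.norm_conj, hfac]
    calc ‖lineGaussKernel j s w‖ * (2 * π * |s j|) * ‖g s‖
        ≤ rexp (-π * ‖s‖ ^ 2 + 2 * π * M * ‖s‖) * rexp (2 * π * ‖s‖) * ‖g s‖ := by
          gcongr
          exact norm_lineGaussKernel_le j s (hre w hw)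
      _ = rexp (-π * ‖s‖ ^ 2 + 2 * π * (M + 1) * ‖s‖) * ‖g s‖ := by
          rw [← Real.exp_add]; ring_nf
  have hdiff : ∀ s, ∀ w ∈ Metric.ball w₀ 1,
      HasDerivAt (fun w => lineGaussKernel j s w * conj (g s))
        (lineGaussKernel j s w * (-2 * π * s j) * conj (g s)) w :=
    fun s w _ => (hasDerivAt_lineGaussKernel j s w).mul_const _
  have hmeas' : AEStronglyMeasurable
      (fun s => lineGaussKernel j s w₀ * (-2 * π * s j) * conj (g s)) :=
    ((continuous_lineGaussKernel j w₀).mul (by fun_prop)).aestronglyMeasurable.mul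
      (continuous_conj.comp_aestronglyMeasurable hg.1)
  exact (hasDerivAt_integral_of_dominated_loc_of_deriv_le (Metric.ball_mem_nhds w₀ one_pos)
    (.of_forall hmeas) hint hmeas' (.of_forall hderiv_le)
    (integrable_rexp_neg_mul_sq_norm_add_mul pi_pos hg _) (.of_forall hdiff)).2.differentiableAt

/-- Up to the factor `2^{-d/4}`, the Bargmann transform of `conj ∘ g` at the point `-w • e_j`. -/
noncomputable def bargmannLine (w : ℂ) : ℂ :=
  cexp (-π * w ^ 2 / 2) * lineGaussIntegral j g w

lemma bargmannLine_zero : bargmannLine j g 0 = L2inner d (gaussW d) g := by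
  simp [bargmannLine, lineGaussIntegral, lineGaussKernel, L2inner, gaussW]

lemma stft_gaussW_single (a b : ℝ) :
    STFT d g (gaussW d) (EuclideanSpace.single j a) (EuclideanSpace.single j b)
      = cexp (-2 * π * I * a * b - π * a ^ 2) * lineGaussIntegral j g (a + b * I) := by
  set e : EuclideanSpace ℝ (Fin d) := EuclideanSpace.single j a
  rw [STFT, ← integral_add_right_eq_self _ e, lineGaussIntegral, ← integral_const_mul]
  refine integral_congr_ae (.of_forall fun s => ?_)
  have hsum : ∑ i, (s + e) i * (EuclideanSpace.single j b : EuclideanSpace ℝ (Fin d)) i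
      = (s j + a) * b := by
    simp [e]
  have hnorm : ‖s + e‖ ^ 2 = ‖s‖ ^ 2 + 2 * a * s j + a ^ 2 := by
    rw [norm_add_sq_real, EuclideanSpace.inner_single_right, PiLp.norm_single]
    simp only [conj_trivial, Real.norm_eq_abs, sq_abs]
    ring
  simp only [gaussW, lineGaussKernel, add_sub_cancel_right, hsum]
  rw [← ofReal_pow, hnorm, ← mul_assoc, ← Complex.exp_add, ← Complex.exp_add]
  congr 2
  push_cast
  ring

lemma norm_bargmannLine (z : ℂ) :
    ‖bargmannLine j g z‖ = rexp (π * ‖z‖ ^ 2 / 2) *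
      ‖STFT d g (gaussW d) (EuclideanSpace.single j z.re) (EuclideanSpace.single j z.im)‖ := by
  rw [stft_gaussW_single, re_add_im, bargmannLine, norm_mul, norm_mul, norm_exp, norm_exp,
    ← mul_assoc, ← Real.exp_add, Complex.sq_norm, normSq_apply]
  congr 2
  simp only [sq, div_ofNat_re, neg_re, neg_im, mul_re, mul_im, sub_re, ofReal_re, ofReal_im, I_re,
    I_im, re_ofNat, im_ofNat]
  ring

lemma norm_L2inner_gaussW_le_of_sphere (hg : MemLp g 2) {r B : ℝ} (hr : 0 < r)
    (hB : ∀ a b : ℝ, a ^ 2 + b ^ 2 = r ^ 2 →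
      ‖STFT d g (gaussW d) (EuclideanSpace.single j a) (EuclideanSpace.single j b)‖ ≤ B) :
    ‖L2inner d (gaussW d) g‖ ≤ B * rexp (π * r ^ 2 / 2) := by
  have hdiff : Differentiable ℂ (bargmannLine j g) :=
    (by fun_prop : Differentiable ℂ fun w : ℂ => cexp (-π * w ^ 2 / 2)).mul
      (differentiable_lineGaussIntegral j g hg)
  have hsphere : ∀ z ∈ frontier (Metric.ball (0 : ℂ) r),
      ‖bargmannLine j g z‖ ≤ B * rexp (π * r ^ 2 / 2) := by
    intro z hz
    rw [frontier_ball 0 hr.ne', mem_sphere_zero_iff_norm] at hz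
    rw [norm_bargmannLine, hz, mul_comm]
    gcongr
    apply hB
    rw [← hz, Complex.sq_norm, normSq_apply]
    ring
  rw [← bargmannLine_zero j g]
  exact Complex.norm_le_of_forall_mem_frontier_norm_le Metric.isBounded_ball hdiff.diffContOnCl
    hsphere (subset_closure (Metric.mem_ball_self hr))

end BargmannLine

lemma sqrt_two_mul_log_div_pi_le {N r : ℝ} (hN : 0 < N) (hr : 0 ≤ r)
    (h : N ≤ rexp (π * r ^ 2 / 2)) : √(2 * Real.log N / π) ≤ r := by
  rw [Real.sqrt_le_iff, div_le_iff₀ pi_pos]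
  refine ⟨hr, ?_⟩
  have := (Real.log_le_iff_le_exp hN).mpr h
  linarith

theorem stmt4_general (d : ℕ) (hd : 1 ≤ d)
    (N R : ℝ) (hR : 0 < R)
    (g : EuclideanSpace ℝ (Fin d) → ℂ)
    (hg : MemLp g 2 (volume : Measure (EuclideanSpace ℝ (Fin d))))
    (h : ∀ x ω : EuclideanSpace ℝ (Fin d), ‖x‖ ^ 2 + ‖ω‖ ^ 2 > R ^ 2 →
      ‖STFT d g (gaussW d) x ω‖
        < ‖L2inner d (gaussW d) g‖ / N) :
    R ≥ Real.sqrt (2 * Real.log N / π) := by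
  set A := ‖L2inner d (gaussW d) g‖
  let j : Fin d := ⟨0, hd⟩
  have hAN : 0 < A / N := (norm_nonneg _).trans_lt <| h (EuclideanSpace.single j (R + 1)) 0 <| by
    simp only [PiLp.norm_single, Real.norm_eq_abs, sq_abs, norm_zero]
    nlinarith
  obtain ⟨hA, hN⟩ : 0 < A ∧ 0 < N := by
    rcases div_pos_iff.mp hAN with hpos | hneg
    · exact hpos
    · exact absurd hneg.1 (norm_nonneg _).not_gt
  refine le_of_forall_gt_imp_ge_of_dense fun r hr =>
    sqrt_two_mul_log_div_pi_le hN (hR.trans hr).le ?_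
  have hmax := norm_L2inner_gaussW_le_of_sphere j g hg (hR.trans hr) fun a b hab =>
    (h _ _ (by simp only [PiLp.norm_single, Real.norm_eq_abs, sq_abs, hab]; nlinarith)).le
  rw [div_mul_eq_mul_div, le_div_iff₀ hN] at hmax
  exact le_of_mul_le_mul_left hmax hA

theorem stmt4 (d : ℕ) (hd : 1 ≤ d)
    (N R : ℝ) (hN : 1 < N) (hR : 0 < R)
    (g : EuclideanSpace ℝ (Fin d) → ℂ)
    (hg : MemLp g 2 (volume : Measure (EuclideanSpace ℝ (Fin d))))
    (hg0 : ¬ g =ᵐ[(volume : Measure (EuclideanSpace ℝ (Fin d)))] 0)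
    (h : ∀ x ω : EuclideanSpace ℝ (Fin d), ‖x‖ ^ 2 + ‖ω‖ ^ 2 > R ^ 2 →
      ‖STFT d g (gaussW d) x ω‖
        < ‖L2inner d (gaussW d) g‖ / N) :
    R ≥ Real.sqrt (2 * Real.log N / π) :=
  stmt4_general d hd N R hR g hg h
end

section
/- Sharpness of the cylinder bound: let d ≥ 1, let g(t) = e^{-π|t|²} be the standard Gaussian on ℝ^d, let 0 < λ ≤ 1 and set f_λ(t) = e^{-πλ²|t|²}. Then for N > 1 and R > 0 the condition |V_g f_λ(x,ω)| ≤ |⟨f_λ,g⟩|/N for every x ∈ ℝ^d and every ω ∈ ℝ^d with |ω| = R holds if and only if R ≥ √((1+λ²) log N / π). In particular, the lower bound R > √(log N / π) in the cylinder uncertainty principle cannot be improved to any larger constant. -/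
open MeasureTheory Complex Real

/-!
Completing the square in `t`, `λ²|t|² + |t - x|² = s|t - x/s|² + (λ²/s)|x|²` with `s = 1 + λ²`,
turns the STFT integral into the Fourier transform of a shifted Gaussian, whence
`|V_g f_λ(x,ω)| = |⟨f_λ,g⟩| e^{-π(λ²|x|² + |ω|²)/s}`. On the sphere `|ω| = R` this is largest at
`x = 0`, so the condition says exactly `e^{-πR²/s} ≤ 1/N`, i.e. `R² ≥ s log N / π`.
-/

open RealInnerProductSpace ComplexConjugate

section InnerProductSpace

variable {V : Type*} [NormedAddCommGroup V] [InnerProductSpace ℝ V]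

theorem mul_norm_sq_add_norm_sub_sq {a : ℝ} (ha : 1 + a ≠ 0) (t x : V) :
    a * ‖t‖ ^ 2 + ‖t - x‖ ^ 2
      = (1 + a) * ‖t - (1 + a)⁻¹ • x‖ ^ 2 + a / (1 + a) * ‖x‖ ^ 2 := by
  rw [norm_sub_sq_real, norm_sub_sq_real, inner_smul_right, norm_smul, mul_pow,
    Real.norm_eq_abs, sq_abs]
  field_simp
  ring

variable [FiniteDimensional ℝ V] [MeasurableSpace V] [BorelSpace V]

theorem integral_cexp_neg_mul_sq_norm_sub_add {b : ℂ} (hb : 0 < b.re) (c : ℂ) (w y : V) :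
    ∫ v : V, cexp (-b * ‖v - y‖ ^ 2 + c * ⟪w, v⟫) =
      (π / b) ^ (Module.finrank ℝ V / 2 : ℂ) * cexp (c * ⟪w, y⟫ + c ^ 2 * ‖w‖ ^ 2 / (4 * b)) := by
  have hshift (v : V) : cexp (-b * ‖v + y - y‖ ^ 2 + c * ⟪w, v + y⟫)
      = cexp (-b * ‖v‖ ^ 2 + c * ⟪w, v⟫) * cexp (c * ⟪w, y⟫) := by
    rw [← Complex.exp_add, add_sub_cancel_right, inner_add_right, ofReal_add]
    ring_nf
  rw [← integral_add_right_eq_self _ y]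
  simp_rw [hshift, integral_mul_const, GaussianFourier.integral_cexp_neg_mul_sq_norm_add hb,
    mul_assoc, ← Complex.exp_add, add_comm]

end InnerProductSpace

noncomputable def dilatedGaussian (d : ℕ) (lam : ℝ) : EuclideanSpace ℝ (Fin d) → ℂ :=
  fun t => cexp (-(π : ℂ) * (lam : ℂ) ^ 2 * (‖t‖ : ℂ) ^ 2)

section STFT

variable {d : ℕ}

theorem EuclideanSpace.sum_mul_eq_inner (t ω : EuclideanSpace ℝ (Fin d)) :
    ∑ j, t j * ω j = ⟪ω, t⟫ := by
  simp [PiLp.inner_apply]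

theorem conj_gaussW (t : EuclideanSpace ℝ (Fin d)) : conj (gaussW d t) = gaussW d t := by
  rw [gaussW, ← Complex.exp_conj]
  simp [Complex.conj_ofReal]

theorem L2inner_eq_STFT_zero (f g : EuclideanSpace ℝ (Fin d) → ℂ) :
    L2inner d f g = STFT d g f 0 0 := by
  simp [L2inner, STFT]

theorem STFT_gaussW_dilatedGaussian (lam : ℝ) (x ω : EuclideanSpace ℝ (Fin d)) :
    STFT d (gaussW d) (dilatedGaussian d lam) x ω
      = ((1 + lam ^ 2 : ℝ)⁻¹ : ℂ) ^ (d / 2 : ℂ)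
        * rexp (-π * (lam ^ 2 * ‖x‖ ^ 2 + ‖ω‖ ^ 2) / (1 + lam ^ 2))
        * cexp ((-2 * π * ⟪x, ω⟫ / (1 + lam ^ 2) : ℝ) * I) := by
  set s := 1 + lam ^ 2 with hs_def
  have hs : 0 < s := by positivity
  have hb : 0 < ((π : ℂ) * s).re := by
    rw [← ofReal_mul, ofReal_re]
    positivity
  have integrand (t : EuclideanSpace ℝ (Fin d)) :
      cexp (-2 * π * I * (∑ j, t j * ω j : ℝ)) * dilatedGaussian d lam t
          * conj (gaussW d (t - x))
        = cexp (-π * lam ^ 2 * ‖x‖ ^ 2 / s)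
          * cexp (-(π * s) * ‖t - s⁻¹ • x‖ ^ 2 + (-2 * π * I) * ⟪ω, t⟫) := by
    have key := congrArg ((↑) : ℝ → ℂ) (mul_norm_sq_add_norm_sub_sq (a := lam ^ 2) hs.ne' t x)
    rw [← hs_def] at key
    push_cast at key
    rw [conj_gaussW, dilatedGaussian, gaussW, ← Complex.exp_add, ← Complex.exp_add,
      ← Complex.exp_add, EuclideanSpace.sum_mul_eq_inner]
    congr 1
    linear_combination (-π : ℂ) * key
  have hπ : (π : ℂ) ≠ 0 := ofReal_ne_zero.2 pi_ne_zero
  have hsC : (s : ℂ) ≠ 0 := ofReal_ne_zero.2 hs.ne'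
  simp_rw [STFT, integrand]
  rw [integral_const_mul, integral_cexp_neg_mul_sq_norm_sub_add hb,
    finrank_euclideanSpace_fin, mul_left_comm, ← Complex.exp_add, ofReal_exp, mul_assoc _ (cexp _), ← Complex.exp_add,
    div_mul_cancel_left₀ hπ]
  congr 2
  rw [inner_smul_right, real_inner_comm]
  push_cast
  field_simp
  linear_combination (4 * ‖ω‖ ^ 2 : ℂ) * I_sq

theorem L2inner_dilatedGaussian_gaussW (lam : ℝ) :
    L2inner d (dilatedGaussian d lam) (gaussW d) = ((1 + lam ^ 2 : ℝ)⁻¹ : ℂ) ^ (d / 2 : ℂ) := by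
  simp [L2inner_eq_STFT_zero, STFT_gaussW_dilatedGaussian]

theorem L2inner_dilatedGaussian_gaussW_ne_zero (lam : ℝ) :
    L2inner d (dilatedGaussian d lam) (gaussW d) ≠ 0 := by
  rw [L2inner_dilatedGaussian_gaussW, cpow_ne_zero_iff]
  exact .inl (inv_ne_zero (ofReal_ne_zero.2 (by positivity)))

theorem norm_STFT_gaussW_dilatedGaussian (lam : ℝ) (x ω : EuclideanSpace ℝ (Fin d)) :
    ‖STFT d (gaussW d) (dilatedGaussian d lam) x ω‖
      = ‖L2inner d (dilatedGaussian d lam) (gaussW d)‖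
        * rexp (-π * (lam ^ 2 * ‖x‖ ^ 2 + ‖ω‖ ^ 2) / (1 + lam ^ 2)) := by
  rw [STFT_gaussW_dilatedGaussian, L2inner_dilatedGaussian_gaussW, norm_mul, norm_mul,
    norm_exp_ofReal_mul_I, mul_one, norm_real, norm_of_nonneg (exp_pos _).le]

end STFT

theorem exp_neg_pi_mul_sq_div_le_inv_iff {s N R : ℝ} (hs : 0 < s) (hN : 0 < N) (hR : 0 ≤ R) :
    rexp (-π * R ^ 2 / s) ≤ N⁻¹ ↔ √(s * Real.log N / π) ≤ R := by
  rw [← exp_log (inv_pos.2 hN), exp_le_exp, Real.log_inv, sqrt_le_left hR, neg_mul, neg_div,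
    neg_le_neg_iff, le_div_iff₀ hs, div_le_iff₀ pi_pos, mul_comm (Real.log N), mul_comm π]

theorem stmt11_general (d : ℕ) (hd : 1 ≤ d) (lam : ℝ)
    (f : EuclideanSpace ℝ (Fin d) → ℂ)
    (hfdef : f = fun t => Complex.exp (-(π : ℂ) * (lam : ℂ) ^ 2 * (‖t‖ : ℂ) ^ 2))
    (N R : ℝ) (hN : 1 < N) (hR : 0 < R) :
    (∀ x ω : EuclideanSpace ℝ (Fin d), ‖ω‖ = R →
        ‖STFT d (gaussW d) f x ω‖
          ≤ ‖L2inner d f (gaussW d)‖ / N)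
      ↔ R ≥ Real.sqrt ((1 + lam ^ 2) * Real.log N / π) := by
  obtain rfl : f = dilatedGaussian d lam := hfdef
  have hM := norm_pos_iff.2 (L2inner_dilatedGaussian_gaussW_ne_zero lam (d := d))
  simp_rw [norm_STFT_gaussW_dilatedGaussian, div_eq_mul_inv _ N, mul_le_mul_iff_right₀ hM]
  rw [ge_iff_le, ← exp_neg_pi_mul_sq_div_le_inv_iff (by positivity) (by linarith) hR.le]
  constructor
  · intro h
    have : Nonempty (Fin d) := ⟨⟨0, hd⟩⟩
    obtain ⟨ω, hω⟩ := exists_norm_eq (EuclideanSpace ℝ (Fin d)) hR.le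
    simpa [hω] using h 0 ω hω
  · rintro h x ω rfl
    refine le_trans (exp_le_exp.2 (div_le_div_of_nonneg_right ?_ (by positivity))) h
    nlinarith [mul_nonneg pi_pos.le (by positivity : 0 ≤ lam ^ 2 * ‖x‖ ^ 2)]

theorem stmt11 (d : ℕ) (hd : 1 ≤ d) (lam : ℝ) (hlam0 : 0 < lam) (hlam1 : lam ≤ 1)
    (f : EuclideanSpace ℝ (Fin d) → ℂ)
    (hfdef : f = fun t => Complex.exp (-(π : ℂ) * (lam : ℂ) ^ 2 * (‖t‖ : ℂ) ^ 2))
    (N R : ℝ) (hN : 1 < N) (hR : 0 < R) :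
    (∀ x ω : EuclideanSpace ℝ (Fin d), ‖ω‖ = R →
        ‖STFT d (gaussW d) f x ω‖
          ≤ ‖L2inner d f (gaussW d)‖ / N)
      ↔ R ≥ Real.sqrt ((1 + lam ^ 2) * Real.log N / π) :=
  stmt11_general d hd lam f hfdef N R hN hR
end
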